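/- Let G be a compactly generated locally compact group with compact generating set K, N ⊴ G a compact subgroup with N ⊆ K^M for some M ∈ ℕ, and let l, l' denote the word lengths on G and G/N respectively (with l'(gN) = inf over the coset of l). If b̄ is a 1-cocycle on G/N satisfying ‖b̄(ḡ)‖ ≥ (1/C)·l'(ḡ)^α − D for all ḡ, then the pullback cocycle b(g) = b̄(gN) satisfies ‖b(g)‖ ≥ (1/C)·(l(g) − M)^α − D for all g with l(g) ≥ M. Consequently the equivariant compression exponent of G is at least that of G/N. -/
import Mathlib


open Pointwise

theorem stmt8 {G : Type*} [Group G] [TopologicalSpace G]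
    (K : Set G) (hK : IsCompact K) (hgen : ∀ g : G, ∃ m : ℕ, g ∈ K ^ m)
    (N : Subgroup G) [N.Normal] (hNc : IsCompact (N : Set G))
    (M : ℕ) (hNM : (N : Set G) ⊆ K ^ M)
    (l : G → ℕ) (hl : ∀ g : G, l g = sInf {m : ℕ | g ∈ K ^ m})
    (l' : G ⧸ N → ℕ)
    (hl' : ∀ x : G ⧸ N, l' x = sInf {k : ℕ | ∃ g : G, (g : G ⧸ N) = x ∧ l g = k})
    {H : Type*} [NormedAddCommGroup H] [InnerProductSpace ℝ H]
    (π : G ⧸ N → H →ₗᵢ[ℝ] H) (bbar : G ⧸ N → H)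
    (hcoc : ∀ x y : G ⧸ N, bbar (x * y) = π x (bbar y) + bbar x)
    (C D α : ℝ) (hC : 0 < C) (hD : 0 < D) (hα0 : 0 < α) (hα1 : α ≤ 1)
    (hlower : ∀ x : G ⧸ N, (1 / C) * (l' x : ℝ) ^ α - D ≤ ‖bbar x‖) :
    ∀ g : G, M ≤ l g →
      (1 / C) * ((l g : ℝ) - (M : ℝ)) ^ α - D ≤ ‖bbar (g : G ⧸ N)‖ := by
  intro g hgM
  -- every element lies in K ^ (l ·)
  have hmem : ∀ h : G, h ∈ K ^ (l h) := by
    intro h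
    have hne : {m : ℕ | h ∈ K ^ m}.Nonempty := hgen h
    have := Nat.sInf_mem hne
    rwa [hl h]
  -- l g ≤ l h + M for any h in the same coset
  have key : l g - M ≤ l' (g : G ⧸ N) := by
    rw [hl']
    refine le_csInf ⟨l g, g, rfl, rfl⟩ ?_
    rintro k ⟨h, hh, rfl⟩
    have hn : h⁻¹ * g ∈ N := QuotientGroup.eq.mp hh
    have hgmem : g ∈ K ^ (l h + M) := by
      have : g = h * (h⁻¹ * g) := by group
      rw [this, pow_add]
      exact Set.mul_mem_mul (hmem h) (hNM hn)
    have : l g ≤ l h + M := by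
      rw [hl g]; exact Nat.sInf_le hgmem
    omega
  have hcast : (l g : ℝ) - (M : ℝ) ≤ (l' (g : G ⧸ N) : ℝ) := by
    have : ((l g - M : ℕ) : ℝ) ≤ (l' (g : G ⧸ N) : ℝ) := by exact_mod_cast key
    rwa [Nat.cast_sub hgM] at this
  have hpow : ((l g : ℝ) - (M : ℝ)) ^ α ≤ (l' (g : G ⧸ N) : ℝ) ^ α := by
    apply Real.rpow_le_rpow _ hcast hα0.le
    have : (M : ℝ) ≤ (l g : ℝ) := by exact_mod_cast hgM
    linarith
  have := hlower (g : G ⧸ N)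
  have hmul : (1 / C) * ((l g : ℝ) - (M : ℝ)) ^ α ≤ (1 / C) * (l' (g : G ⧸ N) : ℝ) ^ α :=
    mul_le_mul_of_nonneg_left hpow (by positivity)
  linarith
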